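/- arXiv:1810.09921 — 2 statements merged into one kernel-verified Lean document; each statement's English description precedes it below -/
import Mathlib

section
/- Fix r ≥ 2 and μ with μ_i > 0 for all i. Let K : ℕ → ℕ^r be a scaling with K_{1,n} = 1 for all n and K_{r,n} = O(1). Then C(n, 2) · E[χ_{12}(n; μ, K_n)] = (1 + o(1)) · (μ_1²/2) · exp(−2 K_avg,n) as n → ∞, where χ_{12} is the indicator of the event U_{12} and K_avg,n = Σ_{i=1}^r μ_i K_{i,n}; equivalently, the ratio of C(n,2)·E[χ_{12}] to (μ_1²/2)e^{−2K_avg,n} tends to 1. -/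
open Finset Filter

noncomputable section

/-- A configuration assigns to each vertex a class in `Fin r` and a selection set. -/
abbrev Config (n r : ℕ) := Fin n → Fin r × Finset (Fin n)

/-- Probability weight of a configuration: each vertex `v` independently has class `i`
with probability `μ i`, and given class `i`, its selection set is a uniformly random
`K i`-subset of the other vertices. -/
noncomputable def wt {r : ℕ} (n : ℕ) (μ : Fin r → ℝ) (K : Fin r → ℕ)
    (ω : Config n r) : ℝ :=
  ∏ v : Fin n,
    if (ω v).2.card = K (ω v).1 ∧ v ∉ (ω v).2 then
      μ (ω v).1 / ((n - 1).choose (K (ω v).1) : ℝ)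
    else 0

/-- Probability of an event in the inhomogeneous random K-out graph model. -/
noncomputable def Pr {r : ℕ} (n : ℕ) (μ : Fin r → ℝ) (K : Fin r → ℕ)
    (E : Set (Config n r)) : ℝ :=
  ∑ ω : Config n r, E.indicator (wt n μ K) ω

/-- Expectation of a real-valued random variable in the model. -/
noncomputable def Ex {r : ℕ} (n : ℕ) (μ : Fin r → ℝ) (K : Fin r → ℕ)
    (f : Config n r → ℝ) : ℝ :=
  ∑ ω : Config n r, f ω * wt n μ K ω

/-- The undirected graph induced by a configuration: `u ~ v` iff at least one of
them selected the other. -/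
def graphOf {n r : ℕ} (ω : Config n r) : SimpleGraph (Fin n) where
  Adj u v := u ≠ v ∧ (u ∈ (ω v).2 ∨ v ∈ (ω u).2)
  symm := ⟨fun _ _ h => ⟨h.1.symm, h.2.symm⟩⟩
  loopless := ⟨fun _ h => h.1 rfl⟩

/-- Probability that the inhomogeneous random K-out graph is connected. -/
noncomputable def Pconn {r : ℕ} (n : ℕ) (μ : Fin r → ℝ) (K : Fin r → ℕ) : ℝ :=
  Pr n μ K {ω | (graphOf ω).Connected}

/-- The event `U_{ij}`: vertices `i` and `j` both have class `c`, each selected exactly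
the other, and no other vertex selected either of them. -/
def Uevent {n r : ℕ} (c : Fin r) (i j : Fin n) : Set (Config n r) :=
  {ω | (ω i).1 = c ∧ (ω j).1 = c ∧ (ω i).2 = {j} ∧ (ω j).2 = {i} ∧
    ∀ l : Fin n, l ≠ i → l ≠ j → i ∉ (ω l).2 ∧ j ∉ (ω l).2}

/-- `Y`: the number of isolated components consisting of two class-`c` vertices. -/
noncomputable def Ycount {n r : ℕ} (c : Fin r) (ω : Config n r) : ℝ :=
  ∑ p : Fin n × Fin n,
    if p.1 < p.2 then (Uevent c p.1 p.2).indicator (fun _ => (1 : ℝ)) ω else 0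

/-- The event `B_{n,ℓ}`: the set of vertices with index `< ℓ` is isolated, i.e. there is
no edge between it and its complement. -/
def Bevent (n r : ℕ) (l : ℕ) : Set (Config n r) :=
  {ω | ∀ u v : Fin n, (u : ℕ) < l → ¬ (v : ℕ) < l → u ∉ (ω v).2 ∧ v ∉ (ω u).2}

/-! Under the product measure the event `U₁₂` factorizes over the vertices: vertices `1` and `2`
must pick each other, with probability `μ₁ / (n - 1)` each since `K₁ = 1`, and each of the other
`n - 2` vertices must avoid both, with probability `q = ∑ᵢ μᵢ C(n-3, Kᵢ) / C(n-1, Kᵢ)`. Expanding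
the binomial ratio, `q = 1 + t / (n - 2)` with `t = E[K(K+1)] / (n - 1) - 2 K_avg`, which is
bounded because the `Kᵢ` are. Then `|log (1 + x) - x| ≤ 2x²` gives `q^(n-2) = e^{t + o(1)}`, and
`t + 2 K_avg = O(1/n)`, so `q^(n-2) e^{2 K_avg} → 1`; the remaining factor is
`2 C(n, 2) / (n - 1)² = n / (n - 1) → 1`. -/

open Topology

theorem abs_log_one_add_sub_self_le {x : ℝ} (hx : |x| ≤ 1 / 2) :
    |Real.log (1 + x) - x| ≤ 2 * x ^ 2 := by
  have h := Real.abs_log_sub_add_sum_range_le (x := -x) (by rw [abs_neg]; linarith) 1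
  simp only [Finset.range_one, Finset.sum_singleton, sub_neg_eq_add, abs_neg] at h
  calc |Real.log (1 + x) - x| = |(-x) ^ (0 + 1) / ((0 : ℕ) + 1) + Real.log (1 + x)| := by
        rw [add_comm (_ / _)]; norm_num [sub_eq_add_neg]
    _ ≤ |x| ^ (1 + 1) / (1 - |x|) := h
    _ ≤ 2 * x ^ 2 := by
        rw [div_le_iff₀ (by linarith), sq_abs]
        nlinarith [sq_nonneg x]

theorem abs_sum_mul_le_of_abs_le {ι : Type*} [Fintype ι] {w f : ι → ℝ} {C : ℝ}
    (hw : ∀ i, 0 ≤ w i) (hsum : ∑ i, w i = 1) (hf : ∀ i, |f i| ≤ C) :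
    |∑ i, w i * f i| ≤ C :=
  calc |∑ i, w i * f i| ≤ ∑ i, w i * |f i| := by
        simpa only [abs_mul, abs_of_nonneg (hw _)] using
          Finset.abs_sum_le_sum_abs (fun i => w i * f i) univ
    _ ≤ ∑ i, w i * C := Finset.sum_le_sum fun i _ => mul_le_mul_of_nonneg_left (hf i) (hw i)
    _ = C := by rw [← Finset.sum_mul, hsum, one_mul]

theorem tendsto_one_add_div_pow_mul_exp_neg {t : ℕ → ℝ} {C : ℝ} (ht : ∀ m, |t m| ≤ C) :
    Tendsto (fun m : ℕ => (1 + t m / m) ^ m * Real.exp (-t m)) atTop (𝓝 1) := by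
  have hexp : ∀ᶠ m : ℕ in atTop, (1 + t m / m) ^ m * Real.exp (-t m) =
      Real.exp (m * (Real.log (1 + t m / m) - t m / m)) ∧
      ‖m * (Real.log (1 + t m / m) - t m / m)‖ ≤ 2 * C ^ 2 / m := by
    filter_upwards [eventually_ge_atTop (⌈2 * C⌉₊ + 1)] with m hm
    have hm0 : (0 : ℝ) < m := by exact_mod_cast (Nat.succ_pos _).trans_le hm
    have hCm : 2 * C ≤ m := (Nat.le_ceil _).trans (by exact_mod_cast (Nat.le_succ _).trans hm)
    have hx : |t m / m| ≤ 1 / 2 := by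
      rw [abs_div, Nat.abs_cast, div_le_iff₀ hm0]; linarith [ht m]
    have hpos : 0 < 1 + t m / m := by linarith [neg_abs_le (t m / m)]
    constructor
    · rw [mul_sub, mul_div_cancel₀ _ hm0.ne', Real.exp_sub, Real.exp_nat_mul, Real.exp_log hpos,
        Real.exp_neg, div_eq_mul_inv (_ ^ m)]
    · calc ‖m * (Real.log (1 + t m / m) - t m / m)‖ ≤ m * (2 * (t m / m) ^ 2) := by
            rw [Real.norm_eq_abs, abs_mul, Nat.abs_cast]
            exact mul_le_mul_of_nonneg_left (abs_log_one_add_sub_self_le hx) hm0.le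
        _ = 2 * |t m| ^ 2 / m := by rw [sq_abs]; field_simp
        _ ≤ 2 * C ^ 2 / m := by gcongr; exact ht m
  have hlim : Tendsto (fun m : ℕ => m * (Real.log (1 + t m / m) - t m / m)) atTop (𝓝 0) :=
    squeeze_zero_norm' (hexp.mono fun _ h => h.2) (tendsto_const_div_atTop_nhds_zero_nat _)
  simpa using ((Real.continuous_exp.tendsto 0).comp hlim).congr' (hexp.mono fun _ h => h.1.symm)

theorem choose_sub_one_div_choose_add_one {m k : ℕ} (hk : k < m) :
    ((m - 1).choose k : ℝ) / (m + 1).choose k = (1 - k / m) * (1 - k / (m + 1)) := by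
  obtain ⟨n, rfl⟩ : ∃ n, m = n + 1 := ⟨m - 1, by omega⟩
  have hpos : (0 : ℝ) < (n + 2).choose k := by exact_mod_cast Nat.choose_pos (by omega)
  have h₁' : (n.choose k : ℝ) * (n + 1) = (n + 1).choose k * (n + 1 - k) := by
    have := congrArg (Nat.cast (R := ℝ)) (Nat.choose_mul_succ_eq n k)
    push_cast [Nat.cast_sub (by omega : k ≤ n + 1)] at this
    exact this
  have h₂' : ((n + 1).choose k : ℝ) * (n + 2) = (n + 2).choose k * (n + 2 - k) := by
    have := congrArg (Nat.cast (R := ℝ)) (Nat.choose_mul_succ_eq (n + 1) k)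
    push_cast [Nat.cast_sub (by omega : k ≤ n + 1 + 1)] at this
    linear_combination this
  rw [Nat.add_sub_cancel, div_eq_iff hpos.ne']
  push_cast
  field_simp
  linear_combination (n + 2) * h₁' + (n + 1 - k) * h₂'

section

variable {r : ℕ}

noncomputable def vertexWt (n : ℕ) (μ : Fin r → ℝ) (K : Fin r → ℕ) (v : Fin n)
    (a : Fin r × Finset (Fin n)) : ℝ :=
  if a.2.card = K a.1 ∧ v ∉ a.2 then μ a.1 / ((n - 1).choose (K a.1) : ℝ) else 0

theorem pr_setOf_forall_mem {n : ℕ} (μ : Fin r → ℝ) (K : Fin r → ℕ)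
    (A : Fin n → Set (Fin r × Finset (Fin n))) :
    Pr n μ K {ω | ∀ v, ω v ∈ A v} = ∏ v, ∑ a, (A v).indicator (vertexWt n μ K v) a := by
  classical
  rw [Fintype.prod_sum, Pr]
  refine Finset.sum_congr rfl fun ω _ => ?_
  by_cases hω : ∀ v, ω v ∈ A v
  · rw [Set.indicator_of_mem (show ω ∈ {ω | ∀ v, ω v ∈ A v} from hω), wt]
    exact Finset.prod_congr rfl fun v _ => (Set.indicator_of_mem (hω v) (vertexWt n μ K v)).symm
  · obtain ⟨v, hv⟩ := not_forall.mp hω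
    rw [Set.indicator_of_notMem (show ω ∉ {ω | ∀ v, ω v ∈ A v} from hω)]
    exact (Finset.prod_eq_zero (Finset.mem_univ v) (Set.indicator_of_notMem hv _)).symm

theorem vertexWt_singleton {n : ℕ} (μ : Fin r → ℝ) (K : Fin r → ℕ) {c : Fin r} (hc : K c = 1)
    {v w : Fin n} (hvw : v ≠ w) :
    vertexWt n μ K v (c, {w}) = μ c / (n - 1 : ℕ) := by
  simp [vertexWt, hc, hvw]

theorem sum_indicator_disjoint_vertexWt {n : ℕ} (μ : Fin r → ℝ) (K : Fin r → ℕ)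
    {T : Finset (Fin n)} {v : Fin n} (hv : v ∉ T) :
    ∑ a, {a : Fin r × Finset (Fin n) | Disjoint a.2 T}.indicator (vertexWt n μ K v) a =
      ∑ i, μ i * ((n - 1 - #T).choose (K i) : ℝ) / ((n - 1).choose (K i) : ℝ) := by
  classical
  rw [Fintype.sum_prod_type]
  refine Finset.sum_congr rfl fun i _ => ?_
  have hsel : ∀ S : Finset (Fin n),
      {a : Fin r × Finset (Fin n) | Disjoint a.2 T}.indicator (vertexWt n μ K v) (i, S) =
        if S ∈ (insert v T)ᶜ.powersetCard (K i) then μ i / ((n - 1).choose (K i) : ℝ) else 0 := by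
    intro S
    simp only [Set.indicator_apply, Set.mem_ofPred_eq, vertexWt, Finset.mem_powersetCard,
      Finset.subset_compl_iff_disjoint_right, Finset.disjoint_insert_right]
    by_cases h1 : Disjoint S T <;> by_cases h2 : #S = K i <;> by_cases h3 : v ∈ S <;>
      simp [h1, h2, h3]
  rw [Finset.sum_congr rfl fun S _ => hsel S, Finset.sum_ite_mem, Finset.univ_inter,
    Finset.sum_const, Finset.card_powersetCard, Finset.card_compl, Finset.card_insert_of_notMem hv,
    nsmul_eq_mul, Fintype.card_fin]
  rw [show n - (#T + 1) = n - 1 - #T by omega]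
  ring

theorem uevent_zero_one_eq {m : ℕ} (c : Fin r) :
    Uevent c (0 : Fin (m + 2)) 1 = {ω | ∀ v, ω v ∈
      if v = 0 then {(c, {1})} else if v = 1 then {(c, {0})}
      else {a : Fin r × Finset (Fin (m + 2)) | Disjoint a.2 {0, 1}}} := by
  ext ω
  simp only [Uevent, Set.mem_ofPred_eq, Finset.disjoint_insert_right,
    Finset.disjoint_singleton_right]
  constructor
  · rintro ⟨h0c, h1c, h0, h1, hl⟩ v
    split_ifs with hv0 hv1
    · subst hv0; exact Prod.ext h0c h0
    · subst hv1; exact Prod.ext h1c h1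
    · exact hl v hv0 hv1
  · intro h
    have h0 : ω 0 = (c, {1}) := by simpa using h 0
    have h1 : ω 1 = (c, {0}) := by simpa using h 1
    refine ⟨by rw [h0], by rw [h1], by rw [h0], by rw [h1], fun l hl0 hl1 => ?_⟩
    simpa [hl0, hl1] using h l

/-- In the graph on `m + 2` vertices, the probability that a vertex other than `0` and `1`
selects neither of them. -/
noncomputable def avoidPairProb (m : ℕ) (μ : Fin r → ℝ) (K : Fin r → ℕ) : ℝ :=
  ∑ i, μ i * ((m - 1).choose (K i) : ℝ) / ((m + 1).choose (K i) : ℝ)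

theorem pr_uevent_zero_one {m : ℕ} (μ : Fin r → ℝ) (K : Fin r → ℕ) {c : Fin r} (hc : K c = 1) :
    Pr (m + 2) μ K (Uevent c 0 1) = (μ c / (m + 1)) ^ 2 * avoidPairProb m μ K ^ m := by
  classical
  have hfar (j : Fin m) : (j.succ.succ : Fin (m + 2)) ∉ ({0, 1} : Finset (Fin (m + 2))) := by
    simp [Fin.ext_iff]
  rw [uevent_zero_one_eq, pr_setOf_forall_mem, Fin.prod_univ_succ, Fin.prod_univ_succ]
  simp only [Fin.succ_zero_eq_one, Fin.succ_ne_zero, if_true, if_false, one_ne_zero,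
    zero_ne_one, Fin.succ_succ_ne_one, Set.indicator_singleton, Fintype.sum_pi_single',
    vertexWt_singleton μ K hc zero_ne_one, vertexWt_singleton μ K hc one_ne_zero]
  have hcard : m + 2 - 1 - #({0, 1} : Finset (Fin (m + 2))) = m - 1 := by
    rw [Finset.card_pair zero_ne_one]; omega
  simp only [sum_indicator_disjoint_vertexWt μ K (hfar _), hcard, Finset.prod_const,
    Finset.card_univ, Fintype.card_fin, avoidPairProb]
  push_cast
  ring

theorem choose_two_mul_pr_uevent_div {m : ℕ} {μ : Fin r → ℝ} {K : Fin r → ℕ} {c : Fin r}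
    (hc : K c = 1) (hμc : μ c ≠ 0) :
    ((m + 2).choose 2 : ℝ) * Pr (m + 2) μ K (Uevent c 0 1) /
        (μ c ^ 2 / 2 * Real.exp (-2 * ∑ i, μ i * (K i : ℝ))) =
      (m + 2) / (m + 1) * avoidPairProb m μ K ^ m * Real.exp (2 * ∑ i, μ i * (K i : ℝ)) := by
  rw [pr_uevent_zero_one μ K hc, Nat.cast_choose_two, neg_mul, Real.exp_neg]
  push_cast
  field_simp
  ring

theorem avoidPairProb_eq {m : ℕ} {μ : Fin r → ℝ} (hsum : ∑ i, μ i = 1) {K : Fin r → ℕ}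
    (hK : ∀ i, K i < m) :
    avoidPairProb m μ K =
      1 + ((∑ i, μ i * (K i * (K i + 1))) / (m + 1) - 2 * ∑ i, μ i * K i) / m := by
  have hterm (i : Fin r) : μ i * ((m - 1).choose (K i) : ℝ) / ((m + 1).choose (K i) : ℝ) =
      μ i + μ i * (K i * (K i + 1)) / (m + 1) / m - 2 * (μ i * K i) / m := by
    have hm : (0 : ℝ) < m := by exact_mod_cast (Nat.zero_le _).trans_lt (hK i)
    rw [mul_div_assoc, choose_sub_one_div_choose_add_one (hK i)]
    field_simp
    ring
  rw [avoidPairProb, Finset.sum_congr rfl fun i _ => hterm i, Finset.sum_sub_distrib,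
    Finset.sum_add_distrib, hsum, ← Finset.sum_div, ← Finset.sum_div, ← Finset.sum_div,
    ← Finset.mul_sum]
  ring

theorem tendsto_avoidPairProb_pow_mul_exp {μ : Fin r → ℝ} (hμ : ∀ i, 0 ≤ μ i)
    (hsum : ∑ i, μ i = 1) {K : ℕ → Fin r → ℕ} {B : ℕ} (hB : ∀ m i, K m i ≤ B) :
    Tendsto (fun m => avoidPairProb m μ (K m) ^ m * Real.exp (2 * ∑ i, μ i * (K m i : ℝ)))
      atTop (𝓝 1) := by
  have hk (m : ℕ) (i : Fin r) : |(K m i : ℝ)| ≤ B := by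
    rw [Nat.abs_cast]; exact_mod_cast hB m i
  set S : ℕ → ℝ := fun m => ∑ i, μ i * (K m i : ℝ)
  set M : ℕ → ℝ := fun m => ∑ i, μ i * (K m i * (K m i + 1) : ℝ)
  have hM (m : ℕ) : |M m| ≤ B * (B + 1) :=
    abs_sum_mul_le_of_abs_le hμ hsum fun i => by
      rw [abs_mul]
      exact mul_le_mul (hk m i) ((abs_add_le _ _).trans (by simpa using hk m i))
        (abs_nonneg _) (Nat.cast_nonneg _)
  have hMdiv (m : ℕ) : |M m / (m + 1)| ≤ |M m| := by
    rw [abs_div, abs_of_pos (by positivity : (0 : ℝ) < m + 1)]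
    exact div_le_self (abs_nonneg _) (by linarith [m.cast_nonneg (α := ℝ)])
  have hMlim : Tendsto (fun m : ℕ => M m / (m + 1)) atTop (𝓝 0) := by
    refine squeeze_zero_norm (a := fun m : ℕ => B * (B + 1) * (1 / ((m : ℝ) + 1))) (fun m => ?_)
      (by simpa using tendsto_one_div_add_atTop_nhds_zero_nat.const_mul ((B : ℝ) * (B + 1)))
    rw [Real.norm_eq_abs, abs_div, abs_of_pos (by positivity : (0 : ℝ) < m + 1),
      ← div_eq_mul_one_div]
    exact div_le_div_of_nonneg_right (hM m) (by positivity)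
  have ht (m : ℕ) : |M m / (m + 1) - 2 * S m| ≤ B * (B + 1) + 2 * B := by
    have hS : |S m| ≤ B := abs_sum_mul_le_of_abs_le hμ hsum (hk m)
    calc |M m / (m + 1) - 2 * S m| ≤ |M m / (m + 1)| + 2 * |S m| := by
          simpa [abs_mul] using abs_sub (M m / (m + 1)) (2 * S m)
      _ ≤ B * (B + 1) + 2 * B := by gcongr; exact (hMdiv m).trans (hM m)
  refine (((tendsto_one_add_div_pow_mul_exp_neg ht).mul
    ((Real.continuous_exp.tendsto 0).comp hMlim)).congr' ?_).trans (by simp)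
  filter_upwards [eventually_gt_atTop B] with m hm
  rw [avoidPairProb_eq hsum fun i => (hB m i).trans_lt hm]
  simp only [M, S, Function.comp_apply, mul_assoc, ← Real.exp_add]
  ring_nf

end

theorem first_moment_asymptotics_general
    (r : ℕ) (μ : Fin r → ℝ)
    (hμ : ∀ i, 0 < μ i) (hsum : ∑ i, μ i = 1)
    (c0 lst : Fin r) (hlst : (lst : ℕ) = r - 1)
    (K : ℕ → Fin r → ℕ)
    (hmono : ∀ n, Monotone (K n))
    (hK1 : ∀ n, K n c0 = 1)
    (hO : ∃ B : ℕ, ∀ n, K n lst ≤ B) :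
    Filter.Tendsto
      (fun m : ℕ =>
        (((m + 2).choose 2 : ℝ) *
            Pr (m + 2) μ (K (m + 2)) (Uevent c0 (0 : Fin (m + 2)) 1)) /
          ((μ c0) ^ 2 / 2 * Real.exp (-2 * ∑ i, μ i * (K (m + 2) i : ℝ))))
      Filter.atTop (nhds 1) := by
  obtain ⟨B, hB⟩ : ∃ B : ℕ, ∀ n i, K n i ≤ B := hO.imp fun B hB n i =>
    (hmono n (Fin.le_def.2 (by omega : (i : ℕ) ≤ lst))).trans (hB n)
  have hfrac : Tendsto (fun m : ℕ => ((m : ℝ) + 2) / (m + 1)) atTop (𝓝 1) := by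
    have h := tendsto_one_div_add_atTop_nhds_zero_nat.const_add (1 : ℝ)
    rw [add_zero] at h
    refine h.congr fun m => ?_
    field_simp
    ring
  have hasymp := tendsto_avoidPairProb_pow_mul_exp (fun i => (hμ i).le) hsum
    (K := fun m => K (m + 2)) fun m i => hB (m + 2) i
  simpa only [choose_two_mul_pr_uevent_div (hK1 _) (hμ c0).ne', mul_one, mul_assoc]
    using hfrac.mul hasymp

/-- Proposition 1 of the paper. If `K_{1,n} = 1` and `K_{r,n} = O(1)`,
then `C(n,2)·E[χ₁₂] = (1 + o(1))·(μ₁²/2)·exp(−2 K_avg,n)`, i.e. the ratio of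
`C(n,2)·E[χ₁₂]` to `(μ₁²/2) e^{−2 K_avg,n}` tends to `1` (here the sequence is indexed
by `n = m + 2` so that the vertices `1` and `2` exist). -/
theorem first_moment_asymptotics
    (r : ℕ) (hr : 2 ≤ r) (μ : Fin r → ℝ)
    (hμ : ∀ i, 0 < μ i) (hsum : ∑ i, μ i = 1)
    (c0 lst : Fin r) (hc0 : (c0 : ℕ) = 0) (hlst : (lst : ℕ) = r - 1)
    (K : ℕ → Fin r → ℕ)
    (hmono : ∀ n, Monotone (K n))
    (hone : ∀ n i, 1 ≤ K n i)
    (hlt : ∀ n, 2 ≤ n → ∀ i, K n i < n)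
    (hK1 : ∀ n, K n c0 = 1)
    (hO : ∃ B : ℕ, ∀ n, K n lst ≤ B) :
    Filter.Tendsto
      (fun m : ℕ =>
        (((m + 2).choose 2 : ℝ) *
            Pr (m + 2) μ (K (m + 2)) (Uevent c0 (0 : Fin (m + 2)) 1)) /
          ((μ c0) ^ 2 / 2 * Real.exp (-2 * ∑ i, μ i * (K (m + 2) i : ℝ))))
      Filter.atTop (nhds 1) :=
  first_moment_asymptotics_general r μ hμ hsum c0 lst hlst K hmono hK1 hO
end
end

section
/- Fix r ≥ 2 and μ with μ_i > 0 for all i. Let K : ℕ → ℕ^r be a scaling with K_{1,n} = 1 for all n and K_{r,n} = O(1). Then E[χ_{12}(n; μ, K_n) χ_{34}(n; μ, K_n)] / (E[χ_{12}(n; μ, K_n)])² = 1 + o(1), i.e., this ratio tends to 1 as n → ∞. -/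
open Finset Filter

noncomputable section

/-! Both events factor over the vertices. On `U_{ij}` the two vertices `i, j` make one
prescribed choice each (probability `w = μ₁/(n-1)` since `K₁ = 1`) and every other vertex must
avoid them (probability `q₂`, where `q_t = avoidProb … t`); likewise for `U₁₂ ∩ U₃₄` with
four vertices. Hence the ratio equals `(q₄/q₂²)^(n-4) / q₂⁴`.
Per class, `C(N-t,k)/C(N,k)` is a product of `t` factors `1 - k/M`; as `k` stays bounded this
gives `q₂ = 1 - O(1/n)` and `q₄ = q₂² + O(1/n²)`, so `n (q₄/q₂² - 1) → 0` and
`(q₄/q₂²)^n → 1`. -/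

open scoped Topology

section Factorization

variable {n r : ℕ} (μ : Fin r → ℝ) (K : Fin r → ℕ)

def vertexWeight (v : Fin n) (a : Fin r × Finset (Fin n)) : ℝ :=
  if a.2.card = K a.1 ∧ v ∉ a.2 then μ a.1 / ((n - 1).choose (K a.1) : ℝ) else 0

/-- The probability that a vertex outside a given `t`-set of vertices selects none of them. -/
def avoidProb (n : ℕ) (t : ℕ) : ℝ :=
  ∑ i, μ i * (((n - 1 - t).choose (K i) : ℝ) / (n - 1).choose (K i))

theorem Pr_setOf_forall (P : Fin n → Fin r × Finset (Fin n) → Prop)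
    [∀ v, DecidablePred (P v)] :
    Pr n μ K {ω | ∀ v, P v (ω v)} = ∏ v, ∑ a ∈ univ.filter (P v), vertexWeight μ K v a := by
  classical
  have hpi : Fintype.piFinset (fun v => univ.filter (P v)) =
      univ.filter (fun ω : Config n r => ∀ v, P v (ω v)) := by
    ext ω; simp
  rw [prod_univ_sum, hpi, sum_filter, Pr]
  refine sum_congr rfl fun ω _ => ?_
  simp only [Set.indicator_apply, Set.mem_ofPred_eq]
  split_ifs <;> rfl

theorem sum_vertexWeight_eq_single {c : Fin r} (hK : K c = 1) {v u : Fin n} (h : u ≠ v) :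
    ∑ a ∈ univ.filter (· = (c, {u})), vertexWeight μ K v a = μ c / (n - 1 : ℕ) := by
  rw [filter_eq', if_pos (mem_univ _), sum_singleton, vertexWeight,
    if_pos ⟨by simp [hK], by simpa using h.symm⟩, hK, Nat.choose_one_right]

theorem sum_vertexWeight_disjoint {S : Finset (Fin n)} {v : Fin n} (hv : v ∉ S) :
    ∑ a ∈ univ.filter (fun a => Disjoint S a.2), vertexWeight μ K v a =
      avoidProb μ K n S.card := by
  classical
  rw [sum_filter, Fintype.sum_prod_type, avoidProb]
  refine sum_congr rfl fun i _ => ?_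
  have hterm : ∀ A : Finset (Fin n),
      (if Disjoint S A then vertexWeight μ K v (i, A) else 0) =
        if A ∈ (insert v S)ᶜ.powersetCard (K i) then μ i / ((n - 1).choose (K i) : ℝ) else 0 := by
    intro A
    simp only [vertexWeight, mem_powersetCard, subset_compl_iff_disjoint_right,
      disjoint_comm (a := A)]
    by_cases hd : Disjoint S A <;> by_cases hc : A.card = K i <;> by_cases hvA : v ∈ A <;>
      simp [hd, hc, hvA]
  rw [sum_congr rfl fun A _ => hterm A, sum_ite_mem, univ_inter, sum_const, card_powersetCard,
    card_compl, card_insert_of_notMem hv, Fintype.card_fin, nsmul_eq_mul, Nat.sub_sub,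
    add_comm S.card 1, ← Nat.sub_sub]
  ring

end Factorization

section MatchedEvent

variable {n r : ℕ}

def matchedEvent (c : Fin r) (S : Finset (Fin n)) (σ : Fin n → Fin n) : Set (Config n r) :=
  {ω | ∀ v, (v ∈ S → ω v = (c, {σ v})) ∧ (v ∉ S → Disjoint S (ω v).2)}

theorem Pr_matchedEvent (μ : Fin r → ℝ) (K : Fin r → ℕ) {c : Fin r} (hK : K c = 1)
    {S : Finset (Fin n)} {σ : Fin n → Fin n} (hσ : ∀ v ∈ S, σ v ≠ v) :
    Pr n μ K (matchedEvent c S σ) =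
      (μ c / (n - 1 : ℕ)) ^ S.card * avoidProb μ K n S.card ^ (n - S.card) := by
  classical
  rw [matchedEvent,
    Pr_setOf_forall μ K fun v a => (v ∈ S → a = (c, {σ v})) ∧ (v ∉ S → Disjoint S a.2),
    ← prod_mul_prod_compl S]
  congr 1
  · rw [prod_eq_pow_card fun v hv => ?_]
    simp only [hv, not_true_eq_false, false_imp_iff, and_true, forall_const]
    exact sum_vertexWeight_eq_single μ K hK (hσ v hv)
  · rw [prod_eq_pow_card fun v hv => ?_, card_compl, Fintype.card_fin]
    have hv : v ∉ S := mem_compl.mp hv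
    simp only [hv, false_imp_iff, true_and, forall_const, not_false_eq_true]
    exact sum_vertexWeight_disjoint μ K hv

theorem Uevent_eq_matchedEvent (c : Fin r) (i j : Fin n) :
    Uevent c i j = matchedEvent c {i, j} (Equiv.swap i j) := by
  ext ω
  simp only [Uevent, matchedEvent, Set.mem_ofPred_eq, forall_and, mem_insert, mem_singleton,
    forall_eq_or_imp, forall_eq, Equiv.swap_apply_left, Equiv.swap_apply_right, Prod.ext_iff,
    disjoint_insert_left, disjoint_singleton_left, not_or, and_imp]
  tauto

theorem matchedEvent_inter {c : Fin r} {S T : Finset (Fin n)} {σ τ : Fin n → Fin n}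
    (hST : Disjoint S T) (hσ : ∀ v ∈ S, σ v ∈ S) (hτ : ∀ v ∈ T, τ v ∈ T) :
    matchedEvent c S σ ∩ matchedEvent c T τ = matchedEvent c (S ∪ T) (S.piecewise σ τ) := by
  ext ω
  simp only [matchedEvent, Set.mem_inter_iff, Set.mem_ofPred_eq, ← forall_and]
  refine forall_congr' fun v => ?_
  by_cases hvS : v ∈ S
  · have hvT : v ∉ T := disjoint_left.mp hST hvS
    have hσT : σ v ∉ T := disjoint_left.mp hST (hσ v hvS)
    simp +contextual [hvS, hvT, hσT]
  by_cases hvT : v ∈ T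
  · have hτS : τ v ∉ S := disjoint_right.mp hST (hτ v hvT)
    simp +contextual [hvS, hvT, hτS]
  · simp [hvS, hvT, disjoint_union_left]

theorem Pr_Uevent (μ : Fin r → ℝ) (K : Fin r → ℕ) {c : Fin r} (hK : K c = 1) {i j : Fin n}
    (hij : i ≠ j) :
    Pr n μ K (Uevent c i j) = (μ c / (n - 1 : ℕ)) ^ 2 * avoidProb μ K n 2 ^ (n - 2) := by
  rw [Uevent_eq_matchedEvent, Pr_matchedEvent μ K hK, card_pair hij]
  exact fun v hv => Equiv.swap_apply_ne_self_iff.mpr ⟨hij, by simpa using hv⟩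

theorem Pr_Uevent_inter_Uevent (μ : Fin r → ℝ) (K : Fin r → ℕ) {c : Fin r} (hK : K c = 1)
    {i j k l : Fin n} (hij : i ≠ j) (hkl : k ≠ l)
    (hdisj : Disjoint ({i, j} : Finset (Fin n)) {k, l}) :
    Pr n μ K (Uevent c i j ∩ Uevent c k l) =
      (μ c / (n - 1 : ℕ)) ^ 4 * avoidProb μ K n 4 ^ (n - 4) := by
  have hmaps : ∀ {a b : Fin n}, a ≠ b → ∀ v ∈ ({a, b} : Finset (Fin n)),
      Equiv.swap a b v ∈ ({a, b} : Finset (Fin n)) := fun hab v hv => by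
    rw [← Equiv.Perm.support_swap hab] at hv ⊢
    exact Equiv.Perm.apply_mem_support.mpr hv
  rw [Uevent_eq_matchedEvent, Uevent_eq_matchedEvent,
    matchedEvent_inter hdisj (hmaps hij) (hmaps hkl), Pr_matchedEvent μ K hK,
    card_union_of_disjoint hdisj, card_pair hij, card_pair hkl]
  intro v hv
  rcases mem_union.mp hv with hv | hv
  · rw [piecewise_eq_of_mem _ _ _ hv]
    exact Equiv.swap_apply_ne_self_iff.mpr ⟨hij, by simpa using hv⟩
  · rw [piecewise_eq_of_notMem _ _ _ (disjoint_right.mp hdisj hv)]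
    exact Equiv.swap_apply_ne_self_iff.mpr ⟨hkl, by simpa using hv⟩

theorem Pr_Uevent_inter_div_sq (μ : Fin r → ℝ) (K : Fin r → ℕ) {c : Fin r} (hK : K c = 1)
    (hμc : μ c ≠ 0) (m : ℕ) :
    Pr (m + 4) μ K (Uevent c (0 : Fin (m + 4)) 1 ∩ Uevent c 2 3) /
        Pr (m + 4) μ K (Uevent c (0 : Fin (m + 4)) 1) ^ 2 =
      (avoidProb μ K (m + 4) 4 / avoidProb μ K (m + 4) 2 ^ 2) ^ m /
        avoidProb μ K (m + 4) 2 ^ 4 := by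
  have h2 : 2 % (m + 4) = 2 := Nat.mod_eq_of_lt (by omega)
  have h3 : 3 % (m + 4) = 3 := Nat.mod_eq_of_lt (by omega)
  have hdisj : Disjoint ({0, 1} : Finset (Fin (m + 4))) {2, 3} := by
    simp [Fin.ext_iff, h2, h3]
  have hw : μ c / ((m + 4 - 1 : ℕ) : ℝ) ≠ 0 := div_ne_zero hμc (Nat.cast_ne_zero.mpr (by omega))
  rw [Pr_Uevent_inter_Uevent μ K hK (by simp) (by simp [Fin.ext_iff, h2, h3]) hdisj,
    Pr_Uevent μ K hK (by simp), show m + 4 - 4 = m by omega, show m + 4 - 2 = m + 2 by omega,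
    mul_pow, ← pow_mul, mul_div_mul_left _ _ (pow_ne_zero 4 hw)]
  ring

end MatchedEvent

section BinomialRatio

theorem one_sub_div_mem_Icc {x M : ℝ} (hx : 0 ≤ x) (hxM : x ≤ M) :
    1 - x / M ∈ Set.Icc (0 : ℝ) 1 := by
  rcases hx.trans hxM |>.eq_or_lt with hM | hM
  · simp [← hM]
  · exact ⟨by rw [sub_nonneg, div_le_one hM]; exact hxM, by linarith [div_nonneg hx hM.le]⟩

theorem abs_mul_sub_mul_le_of_mem_Icc {u v u' v' : ℝ} (hu : u ∈ Set.Icc (0 : ℝ) 1)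
    (hv' : v' ∈ Set.Icc (0 : ℝ) 1) : |u * v - u' * v'| ≤ |v - v'| + |u - u'| := by
  have key : u * v - u' * v' = u * (v - v') + (u - u') * v' := by ring
  rw [key]
  refine (abs_add_le _ _).trans (add_le_add ?_ ?_) <;> rw [abs_mul]
  · exact mul_le_of_le_one_left (abs_nonneg _) (by rw [abs_of_nonneg hu.1]; exact hu.2)
  · exact mul_le_of_le_one_right (abs_nonneg _) (by rw [abs_of_nonneg hv'.1]; exact hv'.2)

theorem div_sub_div_add_two_le {x t M : ℝ} (hx : 0 ≤ x) (ht : 0 < t) (htM : t ≤ M) :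
    |x / M - x / (M + 2)| ≤ 2 * x / t ^ 2 := by
  have hM : 0 < M := ht.trans_le htM
  have key : x / M - x / (M + 2) = 2 * x / (M * (M + 2)) := by field_simp; ring
  rw [key, abs_of_nonneg (by positivity)]
  exact div_le_div_of_nonneg_left (by positivity) (by positivity) (by nlinarith)

theorem choose_div_choose_succ {s k : ℕ} (hk : k ≤ s + 1) :
    (s.choose k : ℝ) / (s + 1).choose k = 1 - k / (s + 1) := by
  have hpos : (0 : ℝ) < (s + 1).choose k := by exact_mod_cast Nat.choose_pos hk
  have h := congrArg (fun x : ℕ => (x : ℝ)) (Nat.choose_mul_succ_eq s k)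
  push_cast [Nat.cast_sub hk] at h
  field_simp
  linear_combination h

theorem choose_div_choose_add {s k : ℕ} (hk : k ≤ s) (j : ℕ) :
    (s.choose k : ℝ) / (s + j).choose k = ∏ i ∈ range j, (1 - k / ((s + i : ℕ) + 1 : ℝ)) := by
  induction j with
  | zero => simp [(Nat.choose_pos hk).ne']
  | succ j ih =>
    have hne : ((s + j).choose k : ℝ) ≠ 0 := by exact_mod_cast (Nat.choose_pos (by omega)).ne'
    rw [prod_range_succ, ← ih, ← choose_div_choose_succ (by omega), ← add_assoc,
      div_mul_div_cancel₀ hne]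

variable {s k : ℕ}

theorem choose_add_two_div_choose_add_four (hk : k ≤ s) :
    ((s + 2).choose k : ℝ) / (s + 4).choose k = (1 - k / (s + 3)) * (1 - k / (s + 4)) := by
  rw [choose_div_choose_add (by omega) 2]
  simp [prod_range_succ]
  ring_nf

theorem choose_div_choose_add_four (hk : k ≤ s) :
    (s.choose k : ℝ) / (s + 4).choose k =
      (1 - k / (s + 1)) * (1 - k / (s + 2)) * ((1 - k / (s + 3)) * (1 - k / (s + 4))) := by
  rw [choose_div_choose_add hk 4]
  simp [prod_range_succ]
  ring_nf

theorem one_sub_choose_add_two_div_mem (hk : k ≤ s) :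
    1 - ((s + 2).choose k : ℝ) / (s + 4).choose k ∈ Set.Icc (0 : ℝ) (2 * k / (s + 1)) := by
  have hx : (0 : ℝ) ≤ k := k.cast_nonneg
  have hk' : (k : ℝ) ≤ s := by exact_mod_cast hk
  have h3 := one_sub_div_mem_Icc (M := (s : ℝ) + 3) hx (by linarith)
  have h4 := one_sub_div_mem_Icc (M := (s : ℝ) + 4) hx (by linarith)
  have h3' : k / ((s : ℝ) + 3) ≤ k / (s + 1) :=
    div_le_div_of_nonneg_left hx (by positivity) (by linarith)
  have h4' : k / ((s : ℝ) + 4) ≤ k / (s + 1) :=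
    div_le_div_of_nonneg_left hx (by positivity) (by linarith)
  have hprod : 0 ≤ k / ((s : ℝ) + 3) * (k / (s + 4)) := by positivity
  rw [choose_add_two_div_choose_add_four hk]
  refine ⟨sub_nonneg.mpr (mul_le_one₀ h3.2 h4.1 h4.2), ?_⟩
  calc 1 - (1 - k / ((s : ℝ) + 3)) * (1 - k / (s + 4))
      = k / ((s : ℝ) + 3) + k / (s + 4) - k / ((s : ℝ) + 3) * (k / (s + 4)) := by ring
    _ ≤ k / (s + 1) + k / (s + 1) := by linarith
    _ = 2 * k / (s + 1) := by ring

theorem abs_choose_div_sub_sq_le (hk : k ≤ s) :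
    |(s.choose k : ℝ) / (s + 4).choose k - (((s + 2).choose k : ℝ) / (s + 4).choose k) ^ 2| ≤
      4 * k / (s + 1) ^ 2 := by
  have hx : (0 : ℝ) ≤ k := k.cast_nonneg
  have hk' : (k : ℝ) ≤ s := by exact_mod_cast hk
  have ht : (0 : ℝ) < s + 1 := by positivity
  have h1 := one_sub_div_mem_Icc (M := (s : ℝ) + 1) hx (by linarith)
  have h3 := one_sub_div_mem_Icc (M := (s : ℝ) + 3) hx (by linarith)
  have h4 := one_sub_div_mem_Icc (M := (s : ℝ) + 4) hx (by linarith)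
  have h13 : |(1 - k / ((s : ℝ) + 1)) - (1 - k / (s + 3))| ≤ 2 * k / (s + 1) ^ 2 := by
    rw [sub_sub_sub_cancel_left, abs_sub_comm, show (s : ℝ) + 3 = s + 1 + 2 by ring]
    exact div_sub_div_add_two_le hx ht le_rfl
  have h24 : |(1 - k / ((s : ℝ) + 2)) - (1 - k / (s + 4))| ≤ 2 * k / (s + 1) ^ 2 := by
    rw [sub_sub_sub_cancel_left, abs_sub_comm, show (s : ℝ) + 4 = s + 2 + 2 by ring]
    exact div_sub_div_add_two_le hx ht (by linarith)
  rw [choose_div_choose_add_four hk, choose_add_two_div_choose_add_four hk]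
  set a := (1 - k / ((s : ℝ) + 3)) * (1 - k / (s + 4))
  have ha : a ∈ Set.Icc (0 : ℝ) 1 := ⟨mul_nonneg h3.1 h4.1, mul_le_one₀ h3.2 h4.1 h4.2⟩
  rw [sq, ← sub_mul, abs_mul, abs_of_nonneg ha.1]
  calc |(1 - k / ((s : ℝ) + 1)) * (1 - k / (s + 2)) - a| * a
      ≤ |(1 - k / ((s : ℝ) + 1)) * (1 - k / (s + 2)) - a| :=
        mul_le_of_le_one_right (abs_nonneg _) ha.2
    _ ≤ |(1 - k / ((s : ℝ) + 2)) - (1 - k / (s + 4))| +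
          |(1 - k / ((s : ℝ) + 1)) - (1 - k / (s + 3))| :=
        abs_mul_sub_mul_le_of_mem_Icc h1 h4
    _ ≤ 2 * k / (s + 1) ^ 2 + 2 * k / (s + 1) ^ 2 := add_le_add h24 h13
    _ = 4 * k / (s + 1) ^ 2 := by ring

end BinomialRatio

section WeightedAverage

variable {ι : Type*} [Fintype ι] {w : ι → ℝ}

theorem wsum_mem_Icc (hw : ∀ i, 0 ≤ w i) (hw1 : ∑ i, w i = 1) {f : ι → ℝ} {lo hi : ℝ}
    (hf : ∀ i, f i ∈ Set.Icc lo hi) : ∑ i, w i * f i ∈ Set.Icc lo hi := by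
  have hconst : ∀ c, ∑ i, w i * c = c := fun c => by rw [← sum_mul, hw1, one_mul]
  exact ⟨hconst lo ▸ sum_le_sum fun i _ => mul_le_mul_of_nonneg_left (hf i).1 (hw i),
    hconst hi ▸ sum_le_sum fun i _ => mul_le_mul_of_nonneg_left (hf i).2 (hw i)⟩

theorem one_sub_wsum (hw1 : ∑ i, w i = 1) (a : ι → ℝ) :
    1 - ∑ i, w i * a i = ∑ i, w i * (1 - a i) := by
  simp only [mul_sub, mul_one, sum_sub_distrib, hw1]

theorem abs_wsum_sub_sq_wsum_le (hw : ∀ i, 0 ≤ w i) (hw1 : ∑ i, w i = 1) {a p : ι → ℝ}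
    {ε δ : ℝ} (ha : ∀ i, 1 - a i ∈ Set.Icc 0 ε) (hp : ∀ i, |p i - a i ^ 2| ≤ δ) :
    |∑ i, w i * p i - (∑ i, w i * a i) ^ 2| ≤ δ + ε ^ 2 := by
  -- the variance of `a` is `E (1 - a)² - (E (1 - a))²`, a difference of two numbers in `[0, ε²]`
  have key : ∑ i, w i * p i - (∑ i, w i * a i) ^ 2 =
      ∑ i, w i * (p i - a i ^ 2) +
        (∑ i, w i * (1 - a i) ^ 2 - (∑ i, w i * (1 - a i)) ^ 2) := by
    rw [← one_sub_wsum hw1]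
    have : ∑ i, w i * (1 - a i) ^ 2 = 1 - 2 * ∑ i, w i * a i + ∑ i, w i * a i ^ 2 := by
      simp only [sub_sq, mul_add, mul_sub, sum_add_distrib, sum_sub_distrib, mul_one, hw1,
        one_pow, mul_sum]
      ring_nf
    rw [this]
    simp only [mul_sub, sum_sub_distrib]
    ring
  have hpδ : ∑ i, w i * (p i - a i ^ 2) ∈ Set.Icc (-δ) δ :=
    wsum_mem_Icc hw hw1 fun i => abs_le.mp (hp i)
  have hsq : ∑ i, w i * (1 - a i) ^ 2 ∈ Set.Icc 0 (ε ^ 2) :=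
    wsum_mem_Icc hw hw1 fun i => ⟨sq_nonneg _, pow_le_pow_left₀ (ha i).1 (ha i).2 2⟩
  have hmean := wsum_mem_Icc hw hw1 ha
  have hmean_sq : (∑ i, w i * (1 - a i)) ^ 2 ≤ ε ^ 2 := pow_le_pow_left₀ hmean.1 hmean.2 2
  rw [key, abs_le]
  constructor <;> nlinarith [hpδ.1, hpδ.2, hsq.1, hsq.2, sq_nonneg (∑ i, w i * (1 - a i))]

end WeightedAverage

section Asymptotics

variable {r : ℕ} {μ : Fin r → ℝ}

theorem avoidProb_estimates (hμ : ∀ i, 0 ≤ μ i) (hsum : ∑ i, μ i = 1) {K : Fin r → ℕ}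
    {B s : ℕ} (hK : ∀ i, K i ≤ B) (hBs : B ≤ s) :
    1 - avoidProb μ K (s + 5) 2 ∈ Set.Icc (0 : ℝ) (2 * B / (s + 1)) ∧
      |avoidProb μ K (s + 5) 4 - avoidProb μ K (s + 5) 2 ^ 2| ≤
        4 * B / (s + 1) ^ 2 + (2 * B / (s + 1)) ^ 2 := by
  have hks : ∀ i, K i ≤ s := fun i => (hK i).trans hBs
  have ha : ∀ i, 1 - ((s + 2).choose (K i) : ℝ) / (s + 4).choose (K i) ∈
      Set.Icc (0 : ℝ) (2 * B / (s + 1)) := fun i => by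
    have h := one_sub_choose_add_two_div_mem (hks i)
    exact ⟨h.1, h.2.trans (by gcongr; exact hK i)⟩
  have hp : ∀ i, |(s.choose (K i) : ℝ) / (s + 4).choose (K i) -
      (((s + 2).choose (K i) : ℝ) / (s + 4).choose (K i)) ^ 2| ≤ 4 * B / (s + 1) ^ 2 :=
    fun i => (abs_choose_div_sub_sq_le (hks i)).trans (by gcongr; exact hK i)
  have h2 : avoidProb μ K (s + 5) 2 =
      ∑ i, μ i * (((s + 2).choose (K i) : ℝ) / (s + 4).choose (K i)) := rfl
  have h4 : avoidProb μ K (s + 5) 4 =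
      ∑ i, μ i * ((s.choose (K i) : ℝ) / (s + 4).choose (K i)) := rfl
  rw [h2, h4, one_sub_wsum hsum]
  exact ⟨wsum_mem_Icc hμ hsum ha, abs_wsum_sub_sq_wsum_le hμ hsum ha hp⟩

variable {K : ℕ → Fin r → ℕ} {B : ℕ}

theorem tendsto_avoidProb_two (hμ : ∀ i, 0 ≤ μ i) (hsum : ∑ i, μ i = 1)
    (hK : ∀ n i, K n i ≤ B) :
    Tendsto (fun m => avoidProb μ (K (m + 4)) (m + 4) 2) atTop (𝓝 1) := by
  refine tendsto_sub_nhds_zero_iff.mp <|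
    squeeze_zero_norm' ?_ (tendsto_const_div_atTop_nhds_zero_nat (2 * B : ℝ))
  filter_upwards [eventually_gt_atTop B] with m hm
  obtain ⟨s, rfl⟩ : ∃ s, m = s + 1 := ⟨m - 1, by omega⟩
  have h := (avoidProb_estimates (s := s) hμ hsum (hK (s + 5)) (by omega)).1
  rw [show s + 1 + 4 = s + 5 from rfl, Real.norm_eq_abs, abs_sub_comm, abs_of_nonneg h.1]
  exact_mod_cast h.2

theorem tendsto_mul_avoidProb_div_sub_one (hμ : ∀ i, 0 ≤ μ i) (hsum : ∑ i, μ i = 1)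
    (hK : ∀ n i, K n i ≤ B) :
    Tendsto (fun m : ℕ => m * (avoidProb μ (K (m + 4)) (m + 4) 4 /
      avoidProb μ (K (m + 4)) (m + 4) 2 ^ 2 - 1)) atTop (𝓝 0) := by
  refine squeeze_zero_norm' ?_ (tendsto_const_div_atTop_nhds_zero_nat (16 * (B + B ^ 2) : ℝ))
  filter_upwards [eventually_gt_atTop (4 * B)] with m hm
  obtain ⟨s, rfl⟩ : ∃ s, m = s + 1 := ⟨m - 1, by omega⟩
  obtain ⟨h2, h4⟩ := avoidProb_estimates (s := s) hμ hsum (hK (s + 5)) (by omega)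
  rw [show s + 1 + 4 = s + 5 from rfl]
  set q₂ := avoidProb μ (K (s + 5)) (s + 5) 2
  set q₄ := avoidProb μ (K (s + 5)) (s + 5) 4
  have ht : (0 : ℝ) < s + 1 := by positivity
  have hq₂ : 1 / 2 ≤ q₂ := by
    have : 2 * (B : ℝ) / (s + 1) ≤ 1 / 2 := by
      rw [div_le_iff₀ ht]
      have : (4 * B : ℝ) < s + 1 := by exact_mod_cast hm
      linarith
    linarith [h2.2]
  have hq₂sq : 1 / 4 ≤ q₂ ^ 2 := by nlinarith
  have hq₂pos : 0 < q₂ ^ 2 := by positivity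
  push_cast
  calc ‖((s : ℝ) + 1) * (q₄ / q₂ ^ 2 - 1)‖ = (s + 1) * |q₄ - q₂ ^ 2| / q₂ ^ 2 := by
        rw [Real.norm_eq_abs, abs_mul, abs_of_pos ht, div_sub_one hq₂pos.ne', abs_div,
          abs_of_pos hq₂pos, mul_div_assoc]
    _ ≤ (s + 1) * (4 * B / (s + 1) ^ 2 + (2 * B / (s + 1)) ^ 2) / (1 / 4) := by gcongr
    _ = 16 * (B + B ^ 2) / (s + 1) := by field_simp; ring

end Asymptotics

theorem second_moment_ratio_general
    (r : ℕ) (μ : Fin r → ℝ)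
    (hμ : ∀ i, 0 < μ i) (hsum : ∑ i, μ i = 1)
    (c0 lst : Fin r) (hlst : (lst : ℕ) = r - 1)
    (K : ℕ → Fin r → ℕ)
    (hmono : ∀ n, Monotone (K n))
    (hK1 : ∀ n, K n c0 = 1)
    (hO : ∃ B : ℕ, ∀ n, K n lst ≤ B) :
    Filter.Tendsto
      (fun m : ℕ =>
        Pr (m + 4) μ (K (m + 4))
            (Uevent c0 (0 : Fin (m + 4)) 1 ∩ Uevent c0 (2 : Fin (m + 4)) 3) /
          (Pr (m + 4) μ (K (m + 4)) (Uevent c0 (0 : Fin (m + 4)) 1)) ^ 2)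
      Filter.atTop (nhds 1) := by
  obtain ⟨B, hB⟩ := hO
  have hKB : ∀ n i, K n i ≤ B := fun n i => (hmono n (Fin.le_def.mpr (by omega))).trans (hB n)
  have hμ₀ : ∀ i, 0 ≤ μ i := fun i => (hμ i).le
  have hlim := (Real.tendsto_one_add_pow_exp_of_tendsto
    (tendsto_mul_avoidProb_div_sub_one hμ₀ hsum hKB)).div
      ((tendsto_avoidProb_two hμ₀ hsum hKB).pow 4) (by norm_num)
  simp only [add_sub_cancel, Real.exp_zero, one_pow, div_one] at hlim
  exact hlim.congr fun m => (Pr_Uevent_inter_div_sq μ _ (hK1 _) (hμ c0).ne' m).symm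

/-- Proposition 2 of the paper. If `K_{1,n} = 1` and `K_{r,n} = O(1)`,
then `E[χ₁₂ χ₃₄] / (E[χ₁₂])² → 1` as `n → ∞` (here the sequence is indexed by
`n = m + 4` so that the vertices `1, 2, 3, 4` exist). -/
theorem second_moment_ratio
    (r : ℕ) (hr : 2 ≤ r) (μ : Fin r → ℝ)
    (hμ : ∀ i, 0 < μ i) (hsum : ∑ i, μ i = 1)
    (c0 lst : Fin r) (hc0 : (c0 : ℕ) = 0) (hlst : (lst : ℕ) = r - 1)
    (K : ℕ → Fin r → ℕ)
    (hmono : ∀ n, Monotone (K n))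
    (hone : ∀ n i, 1 ≤ K n i)
    (hlt : ∀ n, 2 ≤ n → ∀ i, K n i < n)
    (hK1 : ∀ n, K n c0 = 1)
    (hO : ∃ B : ℕ, ∀ n, K n lst ≤ B) :
    Filter.Tendsto
      (fun m : ℕ =>
        Pr (m + 4) μ (K (m + 4))
            (Uevent c0 (0 : Fin (m + 4)) 1 ∩ Uevent c0 (2 : Fin (m + 4)) 3) /
          (Pr (m + 4) μ (K (m + 4)) (Uevent c0 (0 : Fin (m + 4)) 1)) ^ 2)
      Filter.atTop (nhds 1) :=
  second_moment_ratio_general r μ hμ hsum c0 lst hlst K hmono hK1 hO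
end
end
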